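/- arXiv:2207.14391 — 5 statements merged into one kernel-verified Lean document; each statement's English description precedes it below -/
import Mathlib

section
/- Let {X_t}_{t≥1} be a sequence of vectors in ℝ^d, let V ∈ ℝ^{d×d} be a positive definite matrix, and define V̄_t = V + Σ_{s=1}^{t} X_s X_sᵀ (with V̄_0 = V). Then for every n ≥ 1, log(det(V̄_n)/det(V)) ≤ Σ_{t=1}^{n} ‖X_t‖²_{V̄_{t-1}^{-1}}. -/
open Matrix

/-- Weighted norm `‖z‖_V = √(zᵀ V z)`. -/
noncomputable def wnorm {d : ℕ} (V : Matrix (Fin d) (Fin d) ℝ) (z : Fin d → ℝ) : ℝ :=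
  Real.sqrt (z ⬝ᵥ V.mulVec z)

/-!
By the matrix determinant lemma, each rank-one update multiplies the determinant by
`1 + ‖X_t‖²_{V̄_{t-1}⁻¹}`, so `log (det V̄_n / det V)` telescopes into `∑ log (1 + ‖X_t‖²)`,
and `log (1 + x) ≤ x` bounds each term.
-/

namespace Matrix

variable {n : Type*} [Fintype n]

theorem det_add_vecMulVec [DecidableEq n] {R : Type*} [CommRing R] {A : Matrix n n R}
    (hA : IsUnit A.det) (u v : n → R) :
    (A + vecMulVec u v).det = A.det * (1 + v ⬝ᵥ A⁻¹ *ᵥ u) := by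
  rw [vecMulVec_eq Unit, det_add_replicateCol_mul_replicateRow hA, Matrix.mul_assoc,
    ← replicateCol_mulVec, replicateRow_mul_replicateCol, det_unique (n := Unit)]
  simp

theorem posDef_of_succ_eq_add_vecMulVec {A : ℕ → Matrix n n ℝ} {u : ℕ → n → ℝ}
    (h0 : (A 0).PosDef) (hsucc : ∀ t, A (t + 1) = A t + vecMulVec (u (t + 1)) (u (t + 1)))
    (t : ℕ) : (A t).PosDef := by
  induction t with
  | zero => exact h0
  | succ t ih =>
    simpa [hsucc t] using ih.add_posSemidef (posSemidef_vecMulVec_self_star (u (t + 1)))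

theorem PosDef.log_det_add_vecMulVec_self_le [DecidableEq n] {A : Matrix n n ℝ} (hA : A.PosDef)
    (u : n → ℝ) :
    Real.log (A + vecMulVec u u).det ≤ Real.log A.det + u ⬝ᵥ A⁻¹ *ᵥ u := by
  have hq : 0 ≤ u ⬝ᵥ A⁻¹ *ᵥ u := by
    simpa using hA.inv.posSemidef.dotProduct_mulVec_nonneg u
  rw [det_add_vecMulVec hA.det_pos.ne'.isUnit, Real.log_mul hA.det_pos.ne' (by positivity)]
  linarith [Real.log_le_sub_one_of_pos (by positivity : (0:ℝ) < 1 + u ⬝ᵥ A⁻¹ *ᵥ u)]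

theorem log_det_le_log_det_add_sum_of_succ_eq_add_vecMulVec [DecidableEq n]
    {A : ℕ → Matrix n n ℝ} {u : ℕ → n → ℝ} (hA : ∀ t, (A t).PosDef)
    (hsucc : ∀ t, A (t + 1) = A t + vecMulVec (u (t + 1)) (u (t + 1))) (N : ℕ) :
    Real.log (A N).det ≤
      Real.log (A 0).det + ∑ t ∈ Finset.Icc 1 N, u t ⬝ᵥ (A (t - 1))⁻¹ *ᵥ u t := by
  induction N with
  | zero => simp
  | succ N ih =>
    rw [Finset.sum_Icc_succ_top (Nat.le_add_left 1 N), hsucc N, Nat.add_sub_cancel]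
    linarith [(hA N).log_det_add_vecMulVec_self_le (u (N + 1))]

end Matrix

theorem wnorm_sq {d : ℕ} {M : Matrix (Fin d) (Fin d) ℝ} (hM : M.PosSemidef) (z : Fin d → ℝ) :
    wnorm M z ^ 2 = z ⬝ᵥ M *ᵥ z :=
  Real.sq_sqrt (by simpa using hM.dotProduct_mulVec_nonneg z)

theorem stmt_1 {d : ℕ} (X : ℕ → Fin d → ℝ)
    (V : Matrix (Fin d) (Fin d) ℝ) (hV : V.PosDef)
    (Vbar : ℕ → Matrix (Fin d) (Fin d) ℝ)
    (hVbar : ∀ t, Vbar t = V + ∑ s ∈ Finset.Icc 1 t, vecMulVec (X s) (X s)) :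
    ∀ n : ℕ, 1 ≤ n →
      Real.log ((Vbar n).det / V.det) ≤
        ∑ t ∈ Finset.Icc 1 n, (wnorm (Vbar (t - 1))⁻¹ (X t)) ^ 2 := by
  intro n _
  have h0 : Vbar 0 = V := by simp [hVbar 0]
  have hsucc (t : ℕ) : Vbar (t + 1) = Vbar t + vecMulVec (X (t + 1)) (X (t + 1)) := by
    rw [hVbar, hVbar, Finset.sum_Icc_succ_top (Nat.le_add_left 1 t), add_assoc]
  have hpd := posDef_of_succ_eq_add_vecMulVec (h0 ▸ hV) hsucc
  rw [Real.log_div (hpd n).det_pos.ne' hV.det_pos.ne', sub_le_iff_le_add', ← h0]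
  convert log_det_le_log_det_add_sum_of_succ_eq_add_vecMulVec hpd hsucc n using 3 with t
  exact wnorm_sq (hpd (t - 1)).inv.posSemidef (X t)
end

section
/- Let λ > 0 and let V ∈ ℝ^{d×d} be a symmetric matrix such that V − λI is positive semidefinite (in particular V is positive definite). Let μ be a probability measure on a measurable space C, x a fixed action, and φ(x,·) : C → ℝ^d a μ-integrable map with ‖φ(x,c)‖₂ ≤ 1 for all c ∈ C; set ψ(x) := ∫ φ(x,c) dμ(c). Define S(c) := ‖ψ(x)‖_{V^{-1}} − ‖φ(x,c)‖_{V^{-1}}. Then ∫ S(c) dμ(c) ≤ 0 and |S(c)| ≤ 2·λ^{-1/2} for every c ∈ C. -/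
/-!
Since `V ≥ λ I`, the matrix `V⁻¹` is positive semidefinite and `zᵀ V⁻¹ z ≤ ‖z‖² / λ`, so both
terms of `S c` lie in `[0, λ^{-1/2}]`. Writing `V⁻¹ = Bᵀ B` turns `‖·‖_{V⁻¹}` into the Euclidean
norm of the continuous linear map `z ↦ B z`, which commutes with the integral; hence
`‖ψ x‖_{V⁻¹} ≤ ∫ ‖φ x c‖_{V⁻¹} dμ`, which is the bound on `∫ S`.
-/

open Matrix MeasureTheory

lemma wnorm_one {d : ℕ} (z : Fin d → ℝ) : wnorm 1 z = √(∑ i, z i ^ 2) := by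
  simp [wnorm, dotProduct, sq]

lemma wnorm_conjTranspose_mul_self {d : ℕ} (B : Matrix (Fin d) (Fin d) ℝ) (z : Fin d → ℝ) :
    wnorm (Bᴴ * B) z = ‖WithLp.toLp 2 (B *ᵥ z)‖ := by
  rw [wnorm, EuclideanSpace.norm_eq, ← mulVec_mulVec, dotProduct_mulVec, vecMul_conjTranspose,
    star_trivial]
  simp [dotProduct, sq]

open scoped MatrixOrder in
lemma Matrix.PosSemidef.exists_clm_wnorm_eq {d : ℕ} {W : Matrix (Fin d) (Fin d) ℝ}
    (hW : W.PosSemidef) :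
    ∃ L : (Fin d → ℝ) →L[ℝ] EuclideanSpace ℝ (Fin d), ∀ z, wnorm W z = ‖L z‖ := by
  obtain ⟨B, rfl⟩ := CStarAlgebra.nonneg_iff_eq_star_mul_self.mp hW.nonneg
  refine ⟨(EuclideanSpace.equiv (Fin d) ℝ).symm.toContinuousLinearMap ∘L
    LinearMap.toContinuousLinearMap B.mulVecLin, fun z => ?_⟩
  exact wnorm_conjTranspose_mul_self B z

section Integral

variable {d : ℕ} {W : Matrix (Fin d) (Fin d) ℝ} {C : Type*} [MeasurableSpace C] {μ : Measure C}
  {f : C → Fin d → ℝ}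

lemma Matrix.PosSemidef.integrable_wnorm (hW : W.PosSemidef) (hf : Integrable f μ) :
    Integrable (fun c => wnorm W (f c)) μ := by
  obtain ⟨L, hL⟩ := hW.exists_clm_wnorm_eq
  simpa only [hL] using (L.integrable_comp hf).norm

lemma Matrix.PosSemidef.wnorm_integral_le (hW : W.PosSemidef) (hf : Integrable f μ) :
    wnorm W (∫ c, f c ∂μ) ≤ ∫ c, wnorm W (f c) ∂μ := by
  obtain ⟨L, hL⟩ := hW.exists_clm_wnorm_eq
  simp only [hL, ← L.integral_comp_comm hf]
  exact norm_integral_le_integral_norm _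

end Integral

section LowerBound

variable {n : Type*} [DecidableEq n] {V : Matrix n n ℝ} {lam : ℝ}

lemma Matrix.PosSemidef.posDef_of_sub_smul_one (hlam : 0 < lam) (h : (V - lam • 1).PosSemidef) :
    V.PosDef := by
  simpa using PosDef.posSemidef_add h (PosDef.one.smul hlam)

variable [Fintype n]

lemma Matrix.PosSemidef.mul_dotProduct_le_of_sub_smul_one
    (h : (V - lam • 1).PosSemidef) (y : n → ℝ) : lam * (y ⬝ᵥ y) ≤ y ⬝ᵥ V *ᵥ y := by
  have := h.dotProduct_mulVec_nonneg y
  simp only [star_trivial, sub_mulVec, smul_mulVec, one_mulVec, dotProduct_sub,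
    dotProduct_smul, smul_eq_mul] at this
  linarith

lemma Matrix.PosSemidef.mul_dotProduct_inv_mulVec_le (hlam : 0 < lam)
    (h : (V - lam • 1).PosSemidef) (z : n → ℝ) : lam * (z ⬝ᵥ V⁻¹ *ᵥ z) ≤ z ⬝ᵥ z := by
  set y := V⁻¹ *ᵥ z
  have hVy : V *ᵥ y = z := by
    rw [mulVec_mulVec, mul_nonsing_inv _
      ((isUnit_iff_isUnit_det V).mp (h.posDef_of_sub_smul_one hlam).isUnit), one_mulVec]
  -- `λ ‖y‖² ≤ yᵀ V y = zᵀ y ≤ ‖z‖ ‖y‖`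
  have hlow : lam * (y ⬝ᵥ y) ≤ z ⬝ᵥ y := by
    simpa only [hVy, dotProduct_comm y z] using h.mul_dotProduct_le_of_sub_smul_one y
  have hCS : (z ⬝ᵥ y) ^ 2 ≤ (z ⬝ᵥ z) * (y ⬝ᵥ y) := by
    simpa [dotProduct, sq] using Finset.sum_mul_sq_le_sq_mul_sq Finset.univ z y
  have hY : 0 ≤ y ⬝ᵥ y := by simpa using dotProduct_self_star_nonneg y
  have hZ : 0 ≤ z ⬝ᵥ z := by simpa using dotProduct_self_star_nonneg z
  rcases ((mul_nonneg hlam.le hY).trans hlow).eq_or_lt with hq0 | hqpos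
  · rwa [← hq0, mul_zero]
  · refine le_of_mul_le_mul_right ?_ hqpos
    nlinarith [mul_le_mul_of_nonneg_left hlow hZ]

end LowerBound

lemma wnorm_inv_le {d : ℕ} {V : Matrix (Fin d) (Fin d) ℝ} {lam : ℝ} (hlam : 0 < lam)
    (h : (V - lam • 1).PosSemidef) (z : Fin d → ℝ) :
    wnorm V⁻¹ z ≤ lam ^ (-(1 / 2 : ℝ)) * wnorm 1 z := by
  have hq : z ⬝ᵥ V⁻¹ *ᵥ z ≤ lam⁻¹ * (z ⬝ᵥ 1 *ᵥ z) := by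
    rw [one_mulVec, le_inv_mul_iff₀ hlam]
    exact h.mul_dotProduct_inv_mulVec_le hlam z
  rw [wnorm, wnorm, Real.rpow_neg hlam.le, ← Real.sqrt_eq_rpow, ← Real.sqrt_inv,
    ← Real.sqrt_mul (inv_nonneg.mpr hlam.le)]
  exact Real.sqrt_le_sqrt hq

theorem stmt_10_general {d : ℕ} (lam : ℝ) (hlam : 0 < lam)
    (V : Matrix (Fin d) (Fin d) ℝ)
    (hVlam : (V - lam • (1 : Matrix (Fin d) (Fin d) ℝ)).PosSemidef)
    {C : Type*} [MeasurableSpace C] (μ : Measure C) [IsProbabilityMeasure μ]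
    {X : Type*} (x : X) (φ : X → C → Fin d → ℝ)
    (hφint : Integrable (φ x) μ)
    (hφbound : ∀ c, Real.sqrt (∑ i, φ x c i ^ 2) ≤ 1)
    (ψ : X → Fin d → ℝ) (hψ : ψ x = ∫ c, φ x c ∂μ)
    (S : C → ℝ) (hS : ∀ c, S c = wnorm V⁻¹ (ψ x) - wnorm V⁻¹ (φ x c)) :
    (∫ c, S c ∂μ) ≤ 0 ∧ ∀ c, |S c| ≤ 2 * lam ^ (-(1/2 : ℝ)) := by
  have hW : (V⁻¹).PosSemidef := (hVlam.posDef_of_sub_smul_one hlam).posSemidef.inv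
  have hφ1 : ∀ c, wnorm 1 (φ x c) ≤ 1 := fun c => (wnorm_one _).trans_le (hφbound c)
  have hψ1 : wnorm 1 (ψ x) ≤ 1 := by
    rw [hψ]
    refine (PosSemidef.one.wnorm_integral_le hφint).trans ?_
    simpa using integral_mono (PosSemidef.one.integrable_wnorm hφint) (integrable_const 1) hφ1
  have hbound : ∀ z, wnorm 1 z ≤ 1 → wnorm V⁻¹ z ≤ lam ^ (-(1 / 2 : ℝ)) := fun z hz =>
    (wnorm_inv_le hlam hVlam z).trans (mul_le_of_le_one_right (by positivity) hz)
  constructor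
  · rw [integral_congr_ae (.of_forall hS), integral_sub (integrable_const _)
      (hW.integrable_wnorm hφint), integral_const, hψ]
    simpa using hW.wnorm_integral_le hφint
  · intro c
    have h0 : ∀ z, 0 ≤ wnorm V⁻¹ z := fun z => Real.sqrt_nonneg _
    rw [hS c, abs_le]
    constructor <;> linarith [h0 (ψ x), h0 (φ x c), hbound _ hψ1, hbound _ (hφ1 c)]

theorem stmt_10 {d : ℕ} (lam : ℝ) (hlam : 0 < lam)
    (V : Matrix (Fin d) (Fin d) ℝ) (hVsym : V.IsHermitian)
    (hVlam : (V - lam • (1 : Matrix (Fin d) (Fin d) ℝ)).PosSemidef)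
    {C : Type*} [MeasurableSpace C] (μ : Measure C) [IsProbabilityMeasure μ]
    {X : Type*} (x : X) (φ : X → C → Fin d → ℝ)
    (hφint : Integrable (φ x) μ)
    (hφbound : ∀ c, Real.sqrt (∑ i, φ x c i ^ 2) ≤ 1)
    (ψ : X → Fin d → ℝ) (hψ : ψ x = ∫ c, φ x c ∂μ)
    (S : C → ℝ) (hS : ∀ c, S c = wnorm V⁻¹ (ψ x) - wnorm V⁻¹ (φ x c)) :
    (∫ c, S c ∂μ) ≤ 0 ∧ ∀ c, |S c| ≤ 2 * lam ^ (-(1/2 : ℝ)) :=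
  stmt_10_general lam hlam V hVlam μ x φ hφint hφbound ψ hψ S hS
end

section
/- Let V ∈ ℝ^{d×d} be positive definite, β ≥ 0, θ̂ ∈ ℝ^d, and let B = {θ ∈ ℝ^d : ‖θ̂ − θ‖_V ≤ β}. Let X be a set of actions, ψ : X → ℝ^d, φ : X × C → ℝ^d, θ* ∈ ℝ^d with θ* ∈ B, and suppose (x, θ̃) ∈ X × B satisfies ⟨ψ(x), θ̃⟩ ≥ ⟨ψ(x'), θ'⟩ for all (x', θ') ∈ X × B (optimistic choice). Then for every x* ∈ X and every c ∈ C, ⟨θ*, φ(x*,c)⟩ − ⟨θ*, φ(x,c)⟩ ≤ 2β·(‖φ(x,c)‖_{V^{-1}} + S) + D, where D := ⟨θ*, φ(x*,c) − φ(x,c) − ψ(x*) + ψ(x)⟩ and S := ‖ψ(x)‖_{V^{-1}} − ‖φ(x,c)‖_{V^{-1}}. -/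
/-!
The regret splits as `D + ⟨θ*, ψ(x*) - ψ(x)⟩`, and `2β(‖φ(x,c)‖_{V⁻¹} + S) = 2β‖ψ(x)‖_{V⁻¹}`.
By optimism `⟨θ*, ψ(x*)⟩ ≤ ⟨ψ(x), θ̃⟩`, so `⟨θ*, ψ(x*) - ψ(x)⟩ ≤ ⟨ψ(x), θ̃ - θ*⟩`, which the
dual Cauchy–Schwarz inequality `⟨a, b⟩ ≤ ‖a‖_{V⁻¹} ‖b‖_V` bounds by `‖ψ(x)‖_{V⁻¹} ‖θ̃ - θ*‖_V`;
both parameters lie in the ellipsoid `B`, so `‖θ̃ - θ*‖_V ≤ 2β` by the triangle inequality.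
The `V`-norm facts are those of the (semi-)inner product `⟪u, v⟫ = uᵀ V v`.
-/

open Matrix

namespace Matrix.PosSemidef

variable {d : ℕ} {M : Matrix (Fin d) (Fin d) ℝ}

lemma inner_eq_dotProduct_mulVec (hM : M.PosSemidef) (u v : Fin d → ℝ) :
    @inner ℝ _ (M.toInnerProductSpace hM).toInner u v = u ⬝ᵥ M *ᵥ v :=
  dotProduct_comm _ _

lemma wnorm_eq_norm (hM : M.PosSemidef) (z : Fin d → ℝ) :
    wnorm M z = @norm _ (M.toSeminormedAddCommGroup hM).toNorm z := by
  rw [@norm_eq_sqrt_real_inner _ (M.toSeminormedAddCommGroup hM) (M.toInnerProductSpace hM),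
    hM.inner_eq_dotProduct_mulVec]
  rfl

lemma wnorm_sub_le (hM : M.PosSemidef) (u v : Fin d → ℝ) :
    wnorm M (u - v) ≤ wnorm M u + wnorm M v := by
  simp only [hM.wnorm_eq_norm]
  exact @norm_sub_le _ (M.toSeminormedAddCommGroup hM).toSeminormedAddGroup u v

lemma dotProduct_mulVec_le_wnorm_mul_wnorm (hM : M.PosSemidef) (u v : Fin d → ℝ) :
    u ⬝ᵥ M *ᵥ v ≤ wnorm M u * wnorm M v := by
  rw [← hM.inner_eq_dotProduct_mulVec, hM.wnorm_eq_norm, hM.wnorm_eq_norm]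
  exact @real_inner_le_norm _ (M.toSeminormedAddCommGroup hM) (M.toInnerProductSpace hM) u v

lemma wnorm_sub_le_two_mul (hM : M.PosSemidef) {c u v : Fin d → ℝ} {β : ℝ}
    (hu : wnorm M (c - u) ≤ β) (hv : wnorm M (c - v) ≤ β) : wnorm M (u - v) ≤ 2 * β := by
  have := hM.wnorm_sub_le (c - v) (c - u)
  rw [sub_sub_sub_cancel_left] at this
  linarith

end Matrix.PosSemidef

namespace Matrix.PosDef

variable {d : ℕ} {V : Matrix (Fin d) (Fin d) ℝ}

lemma isUnit_det (hV : V.PosDef) : IsUnit V.det :=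
  (isUnit_iff_isUnit_det V).mp hV.isUnit

lemma wnorm_inv_mulVec (hV : V.PosDef) (a : Fin d → ℝ) : wnorm V (V⁻¹ *ᵥ a) = wnorm V⁻¹ a := by
  rw [wnorm, wnorm, mulVec_mulVec, mul_nonsing_inv V hV.isUnit_det, one_mulVec, dotProduct_comm]

lemma dotProduct_le_wnorm_inv_mul_wnorm (hV : V.PosDef) (a b : Fin d → ℝ) :
    a ⬝ᵥ b ≤ wnorm V⁻¹ a * wnorm V b := by
  have hVinv : V⁻¹ᵀ = V⁻¹ := by
    rw [← conjTranspose_eq_transpose_of_trivial, hV.isHermitian.inv.eq]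
  calc a ⬝ᵥ b = V⁻¹ *ᵥ a ⬝ᵥ V *ᵥ b := by
        rw [dotProduct_mulVec, ← vecMul_transpose, hVinv, vecMul_vecMul,
          nonsing_inv_mul V hV.isUnit_det, vecMul_one]
    _ ≤ wnorm V⁻¹ a * wnorm V b := by
        rw [← hV.wnorm_inv_mulVec]
        exact hV.posSemidef.dotProduct_mulVec_le_wnorm_mul_wnorm _ _

end Matrix.PosDef

theorem stmt_12_general {d : ℕ} {X C : Type*}
    (V : Matrix (Fin d) (Fin d) ℝ) (hV : V.PosDef)
    (β : ℝ) (θhat : Fin d → ℝ)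
    (B : Set (Fin d → ℝ)) (hB : B = {θ : Fin d → ℝ | wnorm V (θhat - θ) ≤ β})
    (ψ : X → Fin d → ℝ) (φ : X → C → Fin d → ℝ)
    (θstar : Fin d → ℝ) (hθstar : θstar ∈ B)
    (x : X) (θtil : Fin d → ℝ) (hθtil : θtil ∈ B)
    (hopt : ∀ (x' : X) (θ' : Fin d → ℝ), θ' ∈ B → ψ x' ⬝ᵥ θ' ≤ ψ x ⬝ᵥ θtil) :
    ∀ (xstar : X) (c : C),
      θstar ⬝ᵥ φ xstar c - θstar ⬝ᵥ φ x c ≤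
        2 * β * (wnorm V⁻¹ (φ x c) + (wnorm V⁻¹ (ψ x) - wnorm V⁻¹ (φ x c))) +
          θstar ⬝ᵥ (φ xstar c - φ x c - ψ xstar + ψ x) := by
  intro xstar c
  have hwidth : wnorm V (θtil - θstar) ≤ 2 * β := by
    subst hB
    exact hV.posSemidef.wnorm_sub_le_two_mul hθtil hθstar
  have hoptimism : ψ xstar ⬝ᵥ θstar ≤ ψ x ⬝ᵥ θtil := hopt xstar θstar hθstar
  have hbonus : ψ x ⬝ᵥ (θtil - θstar) ≤ wnorm V⁻¹ (ψ x) * (2 * β) :=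
    (hV.dotProduct_le_wnorm_inv_mul_wnorm _ _).trans
      (mul_le_mul_of_nonneg_left hwidth (Real.sqrt_nonneg _))
  rw [dotProduct_sub] at hbonus
  simp only [dotProduct_comm θstar, add_dotProduct, sub_dotProduct]
  linarith

theorem stmt_12 {d : ℕ} {X C : Type*}
    (V : Matrix (Fin d) (Fin d) ℝ) (hV : V.PosDef)
    (β : ℝ) (hβ : 0 ≤ β) (θhat : Fin d → ℝ)
    (B : Set (Fin d → ℝ)) (hB : B = {θ : Fin d → ℝ | wnorm V (θhat - θ) ≤ β})
    (ψ : X → Fin d → ℝ) (φ : X → C → Fin d → ℝ)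
    (θstar : Fin d → ℝ) (hθstar : θstar ∈ B)
    (x : X) (θtil : Fin d → ℝ) (hθtil : θtil ∈ B)
    (hopt : ∀ (x' : X) (θ' : Fin d → ℝ), θ' ∈ B → ψ x' ⬝ᵥ θ' ≤ ψ x ⬝ᵥ θtil) :
    ∀ (xstar : X) (c : C),
      θstar ⬝ᵥ φ xstar c - θstar ⬝ᵥ φ x c ≤
        2 * β * (wnorm V⁻¹ (φ x c) + (wnorm V⁻¹ (ψ x) - wnorm V⁻¹ (φ x c))) +
          θstar ⬝ᵥ (φ xstar c - φ x c - ψ xstar + ψ x) :=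
  stmt_12_general V hV β θhat B hB ψ φ θstar hθstar x θtil hθtil hopt
end

section
/- Let A, B ∈ ℝ^{d×d} be symmetric positive definite matrices with A − B positive semidefinite. Then for every nonzero x ∈ ℝ^d, (xᵀAx)/(xᵀBx) ≤ det(A)/det(B); equivalently, (xᵀAx)·det(B) ≤ det(A)·(xᵀBx) for all x ∈ ℝ^d. -/
/-!
Write `B = Lᴴ L` with `L` invertible and put `C = L⁻ᴴ A L⁻¹`. Then `A ≥ B` becomes `C ≥ 1`, so
every eigenvalue of `C` is at least `1` and hence at most their product `det C = det A / det B`.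
Thus `C ≤ (det A / det B) • 1`, and conjugating back gives `A ≤ (det A / det B) • B` in the
Loewner order; evaluating both sides at `x` is the claim.
-/

open Matrix
open scoped MatrixOrder

namespace Matrix

variable {n : Type*} [Fintype n]

theorem dotProduct_mulVec_le_of_le {A B : Matrix n n ℝ} (h : A ≤ B) (x : n → ℝ) :
    x ⬝ᵥ A *ᵥ x ≤ x ⬝ᵥ B *ᵥ x := by
  simpa [sub_mulVec, dotProduct_sub] using (le_iff.mp h).dotProduct_mulVec_nonneg x

variable [DecidableEq n]

theorem le_det_smul_one_of_one_le {C : Matrix n n ℝ} (h : 1 ≤ C) : C ≤ C.det • 1 := by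
  have hC : C.IsHermitian := (PosSemidef.one.nonneg.trans h).posSemidef.isHermitian
  have hspec : ∀ x ∈ spectrum ℝ C, 1 ≤ x :=
    (algebraMap_le_iff_le_spectrum (R := ℝ)).1 (by simpa using h)
  have hone : ∀ j, 1 ≤ hC.eigenvalues j := fun j => hspec _ (hC.eigenvalues_mem_spectrum_real j)
  rw [← Algebra.algebraMap_eq_smul_one]
  refine le_algebraMap_of_spectrum_le fun _ hx => ?_
  obtain ⟨i, rfl⟩ := hC.spectrum_real_eq_range_eigenvalues ▸ hx
  simpa [hC.det_eq_prod_eigenvalues, max_eq_left (hone _)] using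
    Finset.le_prod_max_one (Finset.mem_univ i) hC.eigenvalues

theorem le_det_div_det_smul_of_le {A B : Matrix n n ℝ} (hB : B.PosDef) (hBA : B ≤ A) :
    A ≤ (A.det / B.det) • B := by
  obtain ⟨L, hL, rfl⟩ :=
    CStarAlgebra.isStrictlyPositive_iff_eq_star_mul_self.mp hB.isStrictlyPositive
  lift L to (Matrix n n ℝ)ˣ using hL
  set C := star (↑L⁻¹ : Matrix n n ℝ) * A * (↑L⁻¹ : Matrix n n ℝ) with hC_def
  have hC : 1 ≤ C := by
    simpa [hC_def, ← star_mul, mul_assoc] using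
      star_left_conjugate_le_conjugate hBA (↑L⁻¹ : Matrix n n ℝ)
  have hA : star (L : Matrix n n ℝ) * C * L = A := by
    simp [hC_def, ← mul_assoc, ← star_mul]
  have hdet : C.det * (star (L : Matrix n n ℝ) * L).det = A.det := by
    rw [← hA]; simp only [det_mul]; ring
  calc A = star (L : Matrix n n ℝ) * C * L := hA.symm
    _ ≤ star (L : Matrix n n ℝ) * (C.det • 1) * L :=
      star_left_conjugate_le_conjugate (le_det_smul_one_of_one_le hC) _
    _ = (A.det / (star (L : Matrix n n ℝ) * L).det) • (star (L : Matrix n n ℝ) * L) := by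
      rw [← hdet, mul_div_cancel_right₀ _ hB.det_pos.ne']; simp

end Matrix

theorem stmt_13_general {d : ℕ} (A B : Matrix (Fin d) (Fin d) ℝ)
    (hB : B.PosDef) (hAB : (A - B).PosSemidef) :
    (∀ x : Fin d → ℝ, x ≠ 0 →
        (x ⬝ᵥ A.mulVec x) / (x ⬝ᵥ B.mulVec x) ≤ A.det / B.det) ∧
    (∀ x : Fin d → ℝ, (x ⬝ᵥ A.mulVec x) * B.det ≤ A.det * (x ⬝ᵥ B.mulVec x)) := by
  have key : ∀ x : Fin d → ℝ, (x ⬝ᵥ A.mulVec x) * B.det ≤ A.det * (x ⬝ᵥ B.mulVec x) := by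
    intro x
    have h := dotProduct_mulVec_le_of_le (le_det_div_det_smul_of_le hB hAB) x
    rwa [smul_mulVec, dotProduct_smul, smul_eq_mul, div_mul_eq_mul_div,
      le_div_iff₀ hB.det_pos] at h
  refine ⟨fun x hx => ?_, key⟩
  have hBx : 0 < x ⬝ᵥ B.mulVec x := by simpa using hB.dotProduct_mulVec_pos hx
  rw [div_le_div_iff₀ hBx hB.det_pos]
  exact key x

theorem stmt_13 {d : ℕ} (A B : Matrix (Fin d) (Fin d) ℝ)
    (hA : A.PosDef) (hB : B.PosDef) (hAB : (A - B).PosSemidef) :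
    (∀ x : Fin d → ℝ, x ≠ 0 →
        (x ⬝ᵥ A.mulVec x) / (x ⬝ᵥ B.mulVec x) ≤ A.det / B.det) ∧
    (∀ x : Fin d → ℝ, (x ⬝ᵥ A.mulVec x) * B.det ≤ A.det * (x ⬝ᵥ B.mulVec x)) :=
  stmt_13_general A B hB hAB
end

section
/- Let T, R, B > 0, and let (ℓ_1, r_1), …, (ℓ_P, r_P) be pairs of nonnegative reals with ℓ_p > 0 for all p, Σ_{p=1}^{P} ℓ_p ≤ T, Σ_{p=1}^{P} r_p ≤ R, and ℓ_p · r_p ≥ B for every p. Then for every α > 0, P ≤ T/α + R·α/B; in particular, choosing α = √(TB/R) gives P ≤ 2·√(TR/B). -/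
/-!
Fix a scale `α > 0`. Since `(ℓ_p / α) · (r_p α / B) = ℓ_p r_p / B ≥ 1`, AM-GM gives
`ℓ_p / α + r_p α / B ≥ 2` for every epoch, and summing over the epochs yields
`2P ≤ T / α + R α / B`. The scale `α = √(TB/R)` balances the two terms, each then equal to `√(TR/B)`.
-/

open Finset

theorem two_le_add_of_one_le_mul {a b : ℝ} (ha : 0 ≤ a) (hab : 1 ≤ a * b) : 2 ≤ a + b := by
  have hb : 0 < b := pos_of_mul_pos_right (by linarith) ha
  nlinarith [four_mul_le_sq_add a b]

theorem two_mul_card_le_sum_add_sum {ι : Type*} (s : Finset ι) {a b : ι → ℝ}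
    (ha : ∀ i ∈ s, 0 ≤ a i) (hab : ∀ i ∈ s, 1 ≤ a i * b i) :
    2 * (#s : ℝ) ≤ ∑ i ∈ s, a i + ∑ i ∈ s, b i := by
  rw [← sum_add_distrib, mul_comm, ← nsmul_eq_mul, ← sum_const]
  exact sum_le_sum fun i hi ↦ two_le_add_of_one_le_mul (ha i hi) (hab i hi)

theorem div_sqrt_add_mul_sqrt_div {T R B : ℝ} (hT : 0 < T) (hR : 0 < R) (hB : 0 < B) :
    T / √(T * B / R) + R * √(T * B / R) / B = 2 * √(T * R / B) := by
  have hmul : √(T * B / R) * √(T * R / B) = T := by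
    rw [← Real.sqrt_mul (by positivity), show T * B / R * (T * R / B) = T ^ 2 by field_simp,
      Real.sqrt_sq hT.le]
  have hsq : √(T * R / B) ^ 2 = T * R / B := Real.sq_sqrt (by positivity)
  have hpos : 0 < √(T * R / B) := by positivity
  rw [eq_div_of_mul_eq hpos.ne' hmul]
  field_simp
  rw [hsq]
  field_simp
  ring

theorem stmt_15_general {P : ℕ} (T R B : ℝ) (hT : 0 < T) (hR : 0 < R) (hB : 0 < B)
    (ℓ r : Fin P → ℝ) (hℓpos : ∀ p, 0 < ℓ p)
    (hℓ : ∑ p, ℓ p ≤ T) (hr : ∑ p, r p ≤ R) (hprod : ∀ p, B ≤ ℓ p * r p) :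
    (∀ α : ℝ, 0 < α → (P : ℝ) ≤ T / α + R * α / B) ∧
    (P : ℝ) ≤ 2 * Real.sqrt (T * R / B) := by
  have hscale : ∀ α : ℝ, 0 < α → (P : ℝ) ≤ T / α + R * α / B := by
    intro α hα
    have hepoch : ∀ p, 1 ≤ ℓ p / α * (r p * α / B) := fun p ↦ by
      rw [show ℓ p / α * (r p * α / B) = ℓ p * r p / B by field_simp, one_le_div hB]
      exact hprod p
    have hsum := two_mul_card_le_sum_add_sum univ (fun p _ ↦ (div_pos (hℓpos p) hα).le)
      fun p _ ↦ hepoch p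
    rw [← sum_div, ← sum_div, ← sum_mul, card_univ, Fintype.card_fin] at hsum
    have : (∑ p, ℓ p) / α + (∑ p, r p) * α / B ≤ T / α + R * α / B := by gcongr
    linarith [(Nat.cast_nonneg P : (0 : ℝ) ≤ P)]
  refine ⟨hscale, ?_⟩
  have hbalanced := hscale _ (Real.sqrt_pos.2 (by positivity : 0 < T * B / R))
  rwa [div_sqrt_add_mul_sqrt_div hT hR hB] at hbalanced

theorem stmt_15 {P : ℕ} (T R B : ℝ) (hT : 0 < T) (hR : 0 < R) (hB : 0 < B)
    (ℓ r : Fin P → ℝ) (hℓpos : ∀ p, 0 < ℓ p) (hrnn : ∀ p, 0 ≤ r p)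
    (hℓ : ∑ p, ℓ p ≤ T) (hr : ∑ p, r p ≤ R) (hprod : ∀ p, B ≤ ℓ p * r p) :
    (∀ α : ℝ, 0 < α → (P : ℝ) ≤ T / α + R * α / B) ∧
    (P : ℝ) ≤ 2 * Real.sqrt (T * R / B) :=
  stmt_15_general T R B hT hR hB ℓ r hℓpos hℓ hr hprod
end
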